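/- arXiv:2405.07968 — 2 statements merged into one kernel-verified Lean document; each statement's English description precedes it below -/
import Mathlib

section
/- With the notation of the context: 𝒜⁻¹(im F_{n,[ℰ,Â]}) ∩ ker 𝒞 ∩ ker F_{n,[Ē,Ā]} ⊆ ker 𝒦 (as subspaces of ℝ^{nn}) if and only if 𝒜₁⁻¹(im F_{n,[ℰ,Â]}) ∩ W*_{[E,A,0,C]} ⊆ ker K (as subspaces of ℝ^n). -/
open Matrix

/-- The block matrix `F_{k,[E,A]}`: viewed as a `k × k` array of `m × n` blocks,
diagonal blocks equal `E`, superdiagonal blocks equal `A`, all other blocks zero. -/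
noncomputable def Fmat (k : ℕ) {R C : Type*} [Fintype R] [Fintype C]
    (E A : Matrix R C ℝ) : Matrix (Fin k × R) (Fin k × C) ℝ :=
  Matrix.of fun p q =>
    if q.1.val = p.1.val then E p.2 q.2
    else if q.1.val = p.1.val + 1 then A p.2 q.2
    else 0

/-- The matrix `F_{k,[E,A,K]}`: `F_{k,[E,A]}` with an extra block row appended at the
bottom, having `K` in the second block column and zeros elsewhere. -/
noncomputable def FmatK (k : ℕ) {R C : Type*} [Fintype R] [Fintype C] {r : ℕ}
    (E A : Matrix R C ℝ) (K : Matrix (Fin r) C ℝ) :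
    Matrix ((Fin k × R) ⊕ Fin r) (Fin k × C) ℝ :=
  Matrix.of fun p q =>
    match p with
    | Sum.inl pr => Fmat k E A pr q
    | Sum.inr i => if q.1.val = 1 then K i q.2 else 0

/-- The generalized Wong sequence `W^i_{[E,A,B,C]}`:
`W⁰ = {0}`, `W^{i+1} = E⁻¹(A·W^i + im B) ∩ ker C`. -/
noncomputable def WongW {R : Type*} [Fintype R] {n l p : ℕ}
    (E A : Matrix R (Fin n) ℝ) (B : Matrix R (Fin l) ℝ) (C : Matrix (Fin p) (Fin n) ℝ) :
    ℕ → Submodule ℝ (Fin n → ℝ)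
  | 0 => ⊥
  | i + 1 =>
      (Submodule.comap E.mulVecLin
        (Submodule.map A.mulVecLin (WongW E A B C i) ⊔ LinearMap.range B.mulVecLin)) ⊓
        LinearMap.ker C.mulVecLin

/-- The generalized Wong sequence `V^i_{[E,A,B,C]}`:
`V⁰ = ker C`, `V^{i+1} = A⁻¹(E·V^i + im B) ∩ ker C`. -/
noncomputable def WongV {R : Type*} [Fintype R] {n l p : ℕ}
    (E A : Matrix R (Fin n) ℝ) (B : Matrix R (Fin l) ℝ) (C : Matrix (Fin p) (Fin n) ℝ) :
    ℕ → Submodule ℝ (Fin n → ℝ)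
  | 0 => LinearMap.ker C.mulVecLin
  | i + 1 =>
      (Submodule.comap A.mulVecLin
        (Submodule.map E.mulVecLin (WongV E A B C i) ⊔ LinearMap.range B.mulVecLin)) ⊓
        LinearMap.ker C.mulVecLin

/-- The block matrix `𝒜`, an `n × n` array of `m × n` blocks with `A` in block
position `(n,1)` and zeros elsewhere. -/
noncomputable def calA {m n : ℕ} (A : Matrix (Fin m) (Fin n) ℝ) :
    Matrix (Fin n × Fin m) (Fin n × Fin n) ℝ :=
  Matrix.of fun p q => if p.1.val = n - 1 ∧ q.1.val = 0 then A p.2 q.2 else 0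

/-- The block column `𝒜₁`, an `n × 1` array of `m × n` blocks with `A` in the bottom
block and zeros above. -/
noncomputable def calA1 {m n : ℕ} (A : Matrix (Fin m) (Fin n) ℝ) :
    Matrix (Fin n × Fin m) (Fin n) ℝ :=
  Matrix.of fun p j => if p.1.val = n - 1 then A p.2 j else 0

/-- The block row `[K 0 … 0]` (`k` block columns) with `K` in the first block column. -/
noncomputable def firstBlockCol {r n : ℕ} (k : ℕ) (K : Matrix (Fin r) (Fin n) ℝ) :
    Matrix (Fin r) (Fin k × Fin n) ℝ :=
  Matrix.of fun i q => if q.1.val = 0 then K i q.2 else 0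

/-!
Read a vector `y` of `ℝ^{n·n}` as blocks `y₀, …, y_{n-1}`, padded by zeros. Then `𝒜 y`, `𝒞 y`
and `𝒦 y` only see `y₀`, and `y ∈ ker 𝒞 ∩ ker F_{n,[Ē,Ā]}` says exactly that `(yᵢ)` is a chain
with `E yᵢ + A yᵢ₊₁ = 0` and `C yᵢ = 0`. The heads of such chains of length `k` form `W^k`, and
`W* = W^n` because the Wong sequence is an increasing chain of subspaces of `ℝⁿ` that stays put
once it stalls. So `y ↦ y₀` maps `ker 𝒞 ∩ ker F_{n,[Ē,Ā]}` onto `W*`, and the equivalence is the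
projection formula `f (f⁻¹ T ∩ U) = T ∩ f U`.
-/

lemma Fin.sum_ite_val_eq {M : Type*} [AddCommMonoid M] {k : ℕ} (i : ℕ) (f : Fin k → M) :
    ∑ q : Fin k, (if (q : ℕ) = i then f q else 0) = if h : i < k then f ⟨i, h⟩ else 0 := by
  split_ifs with h
  · have hq : ∀ q : Fin k, (q : ℕ) = i ↔ q = ⟨i, h⟩ := fun q =>
      (Fin.ext_iff (a := q) (b := ⟨i, h⟩)).symm
    simp_rw [hq, Finset.sum_ite_eq', Finset.mem_univ, if_true]
  · exact Finset.sum_eq_zero fun q _ => if_neg (by omega)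

theorem Submodule.iSup_eq_of_stabilises {K V : Type*} [DivisionRing K] [AddCommGroup V]
    [Module K V] [FiniteDimensional K V] {W : ℕ → Submodule K V} (hmono : Monotone W)
    (hstab : ∀ i, W i = W (i + 1) → W (i + 1) = W (i + 2)) {N : ℕ}
    (hN : Module.finrank K V ≤ N) : ⨆ i, W i = W N := by
  have hrank : ∀ j ≥ Module.finrank K V,
      Module.finrank K (W j) = Module.finrank K (W (Module.finrank K V)) := fun j hj =>
    Nat.stabilises_of_monotone (fun _ _ h => Submodule.finrank_mono (hmono h))
      (fun i => Submodule.finrank_le (W i))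
      (fun i h => congrArg (fun S : Submodule K V => Module.finrank K S)
        (hstab i (Submodule.eq_of_le_of_finrank_eq (hmono i.le_succ) h))) hj
  refine le_antisymm (iSup_le fun j => ?_) (le_iSup W N)
  rcases le_total j N with hjN | hNj
  · exact hmono hjN
  · exact (Submodule.eq_of_le_of_finrank_eq (hmono hNj)
      ((hrank N hN).trans (hrank j (hN.trans hNj)).symm)).ge

lemma Submodule.comap_inf_le_comap_iff {R M N : Type*} [Semiring R] [AddCommMonoid M]
    [AddCommMonoid N] [Module R M] [Module R N] (f : M →ₗ[R] N) (T T' : Submodule R N)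
    (U : Submodule R M) : comap f T ⊓ U ≤ comap f T' ↔ T ⊓ map f U ≤ T' := by
  rw [inf_comm T, map_inf_eq_map_inf_comap, map_le_iff_le_comap, inf_comm]

section WongW

variable {R : Type*} [Fintype R] {n l p : ℕ} (E A : Matrix R (Fin n) ℝ)
  (B : Matrix R (Fin l) ℝ) (C : Matrix (Fin p) (Fin n) ℝ)

lemma wongW_succ_le_succ {i j : ℕ} (h : WongW E A B C i ≤ WongW E A B C j) :
    WongW E A B C (i + 1) ≤ WongW E A B C (j + 1) :=
  inf_le_inf_right _ (Submodule.comap_mono (sup_le_sup_right (Submodule.map_mono h) _))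

lemma wongW_monotone : Monotone (WongW E A B C) := by
  refine monotone_nat_of_le_succ fun i => ?_
  induction i with
  | zero => exact bot_le
  | succ i ih => exact wongW_succ_le_succ E A B C ih

lemma iSup_wongW_eq {N : ℕ} (hN : n ≤ N) : ⨆ i, WongW E A B C i = WongW E A B C N :=
  Submodule.iSup_eq_of_stabilises (wongW_monotone E A B C)
    (fun i h => show WongW E A B C (i + 1) = WongW E A B C (i + 1 + 1) by
      rw [WongW, WongW, h])
    (by rwa [Module.finrank_fin_fun])

end WongW

def IsWongChain {R ι : Type*} [Fintype R] [Fintype ι] {p : ℕ} (E A : Matrix R ι ℝ)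
    (C : Matrix (Fin p) ι ℝ) (z : ℕ → ι → ℝ) : Prop :=
  (∀ i, C *ᵥ z i = 0) ∧ ∀ i, E *ᵥ z i + A *ᵥ z (i + 1) = 0

section WongChain

variable {R : Type*} [Fintype R] {n p : ℕ} (E A : Matrix R (Fin n) ℝ)
  (C : Matrix (Fin p) (Fin n) ℝ)

lemma mem_wongW_succ_zero_iff {k : ℕ} {v : Fin n → ℝ} :
    v ∈ WongW E A (0 : Matrix R (Fin 1) ℝ) C (k + 1) ↔
      (∃ w ∈ WongW E A (0 : Matrix R (Fin 1) ℝ) C k, A *ᵥ w = E *ᵥ v) ∧ C *ᵥ v = 0 := by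
  simp [WongW]

lemma mem_wongW_zero_iff {k : ℕ} {v : Fin n → ℝ} :
    v ∈ WongW E A (0 : Matrix R (Fin 1) ℝ) C k ↔
      ∃ z, IsWongChain E A C z ∧ z 0 = v ∧ ∀ j, k ≤ j → z j = 0 := by
  induction k generalizing v with
  | zero =>
    simp only [WongW, Submodule.mem_bot]
    constructor
    · rintro rfl
      exact ⟨0, ⟨fun _ => mulVec_zero _, fun _ => by simp⟩, rfl, fun _ _ => rfl⟩
    · rintro ⟨z, -, rfl, hz⟩
      exact hz 0 le_rfl
  | succ k ih =>
    rw [mem_wongW_succ_zero_iff]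
    constructor
    · rintro ⟨⟨w, hw, hAw⟩, hCv⟩
      -- `E v = A w`, so the chain through `w` continues from `v` after a change of sign
      obtain ⟨z, ⟨hzC, hzEA⟩, rfl, hz⟩ := ih.1 hw
      refine ⟨fun | 0 => v | i + 1 => -z i, ⟨?_, ?_⟩, rfl, ?_⟩
      · rintro (_ | i)
        exacts [hCv, by simp [mulVec_neg, hzC]]
      · rintro (_ | i)
        · simp [mulVec_neg, hAw]
        · simp [mulVec_neg, ← neg_add, hzEA]
      · rintro (_ | j) hj
        · omega
        · simp [hz j (by omega)]
    · rintro ⟨z, ⟨hzC, hzEA⟩, rfl, hz⟩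
      refine ⟨⟨-z 1, ih.2 ⟨fun i => -z (i + 1), ⟨?_, ?_⟩, rfl, ?_⟩, ?_⟩, hzC 0⟩
      · simp [mulVec_neg, hzC]
      · simp [mulVec_neg, ← neg_add, hzEA]
      · intro j hj
        simp [hz (j + 1) (by omega)]
      · rw [mulVec_neg, neg_eq_iff_add_eq_zero, add_comm]
        exact hzEA 0

end WongChain

def blockSeq {S ι : Type*} [Semiring S] (k i : ℕ) : (Fin k × ι → S) →ₗ[S] ι → S :=
  if h : i < k then LinearMap.pi fun j => LinearMap.proj (⟨i, h⟩, j) else 0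

section blockSeq

variable {S ι : Type*} [Semiring S] {k : ℕ}

lemma blockSeq_apply_of_lt {i : ℕ} (h : i < k) (y : Fin k × ι → S) :
    blockSeq k i y = fun j => y (⟨i, h⟩, j) := by
  simp [blockSeq, h]; rfl

lemma blockSeq_apply_of_le {i : ℕ} (h : k ≤ i) (y : Fin k × ι → S) : blockSeq k i y = 0 := by
  simp [blockSeq, show ¬ i < k by omega]

lemma mulVec_blockSeq_apply {R : Type*} [Fintype R] [Fintype ι] (M : Matrix R ι S)
    (y : Fin k × ι → S) (i : ℕ) (a : R) :
    (M *ᵥ blockSeq k i y) a =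
      ∑ q : Fin k, if (q : ℕ) = i then (M *ᵥ fun j => y (q, j)) a else 0 := by
  rw [Fin.sum_ite_val_eq]
  split_ifs with h
  · rw [blockSeq_apply_of_lt h]
  · rw [blockSeq_apply_of_le (by omega), mulVec_zero, Pi.zero_apply]

end blockSeq

lemma Fmat_mulVec_apply {R ι : Type*} [Fintype R] [Fintype ι] {k : ℕ} (E A : Matrix R ι ℝ)
    (y : Fin k × ι → ℝ) (i : Fin k) (a : R) :
    (Fmat k E A *ᵥ y) (i, a) = (E *ᵥ blockSeq k i y + A *ᵥ blockSeq k (i + 1) y) a := by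
  rw [Pi.add_apply, mulVec_blockSeq_apply, mulVec_blockSeq_apply, ← Finset.sum_add_distrib]
  simp only [mulVec, dotProduct, Fmat, of_apply, Fintype.sum_prod_type]
  refine Finset.sum_congr rfl fun q _ => ?_
  split_ifs <;> first | omega | simp

lemma firstBlockCol_mulVecLin {r n : ℕ} (k : ℕ) (K : Matrix (Fin r) (Fin n) ℝ) :
    (firstBlockCol k K).mulVecLin = K.mulVecLin ∘ₗ blockSeq k 0 := by
  ext y b
  simp only [mulVecLin_apply, LinearMap.comp_apply, mulVec_blockSeq_apply]
  simp only [mulVec, dotProduct, firstBlockCol, of_apply, Fintype.sum_prod_type]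
  refine Finset.sum_congr rfl fun q _ => ?_
  split_ifs <;> simp

lemma calA_mulVecLin {m n : ℕ} (A : Matrix (Fin m) (Fin n) ℝ) :
    (calA A).mulVecLin = (calA1 A).mulVecLin ∘ₗ blockSeq n 0 := by
  refine LinearMap.ext fun y => funext fun ⟨i, a⟩ => ?_
  simp only [mulVecLin_apply, LinearMap.comp_apply]
  by_cases hi : (i : ℕ) = n - 1
  · have hA1 : (calA1 A *ᵥ blockSeq n 0 y) (i, a) = (A *ᵥ blockSeq n 0 y) a := by
      simp [mulVec, dotProduct, calA1, hi]
    rw [hA1, mulVec_blockSeq_apply]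
    simp only [mulVec, dotProduct, calA, of_apply, hi, true_and, Fintype.sum_prod_type]
    refine Finset.sum_congr rfl fun q _ => ?_
    split_ifs <;> simp
  · simp [mulVec, dotProduct, calA, calA1, hi]

lemma Fmat_mulVec_eq_zero_iff {R ι : Type*} [Fintype R] [Fintype ι] {k : ℕ}
    (E A : Matrix R ι ℝ) (y : Fin k × ι → ℝ) :
    Fmat k E A *ᵥ y = 0 ↔ ∀ i : Fin k, E *ᵥ blockSeq k i y + A *ᵥ blockSeq k (i + 1) y = 0 := by
  simp only [funext_iff, Prod.forall, Fmat_mulVec_apply, Pi.zero_apply]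

lemma mem_ker_firstBlockCol_inf_ker_Fmat_iff {R : Type*} [Fintype R] {n p k : ℕ}
    (E A : Matrix R (Fin n) ℝ) (C : Matrix (Fin p) (Fin n) ℝ) (y : Fin k × Fin n → ℝ) :
    y ∈ LinearMap.ker (firstBlockCol k C).mulVecLin ⊓
        LinearMap.ker (Fmat k (fromRows E (0 : Matrix (Fin p) (Fin n) ℝ))
          (fromRows A C)).mulVecLin ↔
      IsWongChain E A C fun i => blockSeq k i y := by
  have hF : ∀ u w : Fin n → ℝ,
      fromRows E (0 : Matrix (Fin p) (Fin n) ℝ) *ᵥ u + fromRows A C *ᵥ w = 0 ↔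
        E *ᵥ u + A *ᵥ w = 0 ∧ C *ᵥ w = 0 := fun u w => by
    rw [fromRows_mulVec, fromRows_mulVec, zero_mulVec, ← Sum.elim_add_add, zero_add,
      ← Sum.elim_zero_zero, Sum.elim_eq_iff]
  simp only [Submodule.mem_inf, LinearMap.mem_ker, firstBlockCol_mulVecLin, LinearMap.comp_apply,
    mulVecLin_apply, Fmat_mulVec_eq_zero_iff, hF, forall_and, IsWongChain]
  have hzero : ∀ i, k ≤ i → blockSeq k i y = 0 := fun i hi => blockSeq_apply_of_le hi y
  constructor
  · rintro ⟨hC0, hEA, hC⟩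
    refine ⟨fun i => ?_, fun i => ?_⟩
    · rcases i with _ | i
      · exact hC0
      · by_cases hi : i < k
        · exact hC ⟨i, hi⟩
        · rw [hzero _ (by omega), mulVec_zero]
    · by_cases hi : i < k
      · exact hEA ⟨i, hi⟩
      · rw [hzero _ (by omega), hzero _ (by omega), mulVec_zero, mulVec_zero, add_zero]
  · rintro ⟨hC, hEA⟩
    exact ⟨hC 0, fun i => hEA i, fun i => hC (i + 1)⟩

lemma map_blockSeq_ker_eq_wongW {R : Type*} [Fintype R] {n p k : ℕ}
    (E A : Matrix R (Fin n) ℝ) (C : Matrix (Fin p) (Fin n) ℝ) :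
    (LinearMap.ker (firstBlockCol k C).mulVecLin ⊓
        LinearMap.ker (Fmat k (fromRows E (0 : Matrix (Fin p) (Fin n) ℝ))
          (fromRows A C)).mulVecLin).map (blockSeq k 0) =
      WongW E A (0 : Matrix R (Fin 1) ℝ) C k := by
  ext v
  rw [Submodule.mem_map, mem_wongW_zero_iff]
  constructor
  · rintro ⟨y, hy, rfl⟩
    exact ⟨_, (mem_ker_firstBlockCol_inf_ker_Fmat_iff E A C y).1 hy, rfl,
      fun j hj => blockSeq_apply_of_le hj y⟩
  · rintro ⟨z, hz, rfl, hzk⟩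
    have hblock : (fun i => blockSeq k i fun q : Fin k × Fin n => z q.1 q.2) = z := by
      funext i
      by_cases hi : i < k
      · exact blockSeq_apply_of_lt hi _
      · rw [blockSeq_apply_of_le (by omega), hzk i (by omega)]
    exact ⟨_, (mem_ker_firstBlockCol_inf_ker_Fmat_iff E A C _).2 (by rwa [hblock]),
      congrFun hblock 0⟩

theorem stmt_7_general {m n l p r : ℕ}
    (E A : Matrix (Fin m) (Fin n) ℝ) (B : Matrix (Fin m) (Fin l) ℝ)
    (C : Matrix (Fin p) (Fin n) ℝ) (K : Matrix (Fin r) (Fin n) ℝ) :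
    (Submodule.comap (calA A).mulVecLin
        (LinearMap.range (Fmat n (Matrix.fromCols E (0 : Matrix (Fin m) (Fin l) ℝ))
          (Matrix.fromCols A B)).mulVecLin) ⊓
      LinearMap.ker (firstBlockCol n C).mulVecLin ⊓
      LinearMap.ker (Fmat n (Matrix.fromRows E (0 : Matrix (Fin p) (Fin n) ℝ))
        (Matrix.fromRows A C)).mulVecLin ≤
      LinearMap.ker (firstBlockCol n K).mulVecLin) ↔
    (Submodule.comap (calA1 A).mulVecLin
        (LinearMap.range (Fmat n (Matrix.fromCols E (0 : Matrix (Fin m) (Fin l) ℝ))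
          (Matrix.fromCols A B)).mulVecLin) ⊓
      (⨆ i, WongW E A (0 : Matrix (Fin m) (Fin 1) ℝ) C i) ≤
      LinearMap.ker K.mulVecLin) := by
  rw [calA_mulVecLin, firstBlockCol_mulVecLin n K, Submodule.comap_comp, LinearMap.ker_comp,
    inf_assoc, Submodule.comap_inf_le_comap_iff, map_blockSeq_ker_eq_wongW,
    iSup_wongW_eq _ _ _ _ le_rfl]

/-- Equivalence of statements (ii) and (iii) of Theorem 3.10:
`𝒜⁻¹(im F_{n,[ℰ,Â]}) ∩ ker 𝒞 ∩ ker F_{n,[Ē,Ā]} ⊆ ker 𝒦` iff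
`𝒜₁⁻¹(im F_{n,[ℰ,Â]}) ∩ W*_{[E,A,0,C]} ⊆ ker K`. -/
theorem stmt_7 {m n l p r : ℕ} (hn : 1 ≤ n)
    (E A : Matrix (Fin m) (Fin n) ℝ) (B : Matrix (Fin m) (Fin l) ℝ)
    (C : Matrix (Fin p) (Fin n) ℝ) (K : Matrix (Fin r) (Fin n) ℝ) :
    (Submodule.comap (calA A).mulVecLin
        (LinearMap.range (Fmat n (Matrix.fromCols E (0 : Matrix (Fin m) (Fin l) ℝ))
          (Matrix.fromCols A B)).mulVecLin) ⊓
      LinearMap.ker (firstBlockCol n C).mulVecLin ⊓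
      LinearMap.ker (Fmat n (Matrix.fromRows E (0 : Matrix (Fin p) (Fin n) ℝ))
        (Matrix.fromRows A C)).mulVecLin ≤
      LinearMap.ker (firstBlockCol n K).mulVecLin) ↔
    (Submodule.comap (calA1 A).mulVecLin
        (LinearMap.range (Fmat n (Matrix.fromCols E (0 : Matrix (Fin m) (Fin l) ℝ))
          (Matrix.fromCols A B)).mulVecLin) ⊓
      (⨆ i, WongW E A (0 : Matrix (Fin m) (Fin 1) ℝ) C i) ≤
      LinearMap.ker K.mulVecLin) :=
  stmt_7_general E A B C K
end

section
/- Let E_ε, A_ε ∈ ℝ^{m_ε×n_ε} with rank E_ε = m_ε; let J_f ∈ ℝ^{n_f×n_f} be arbitrary; let J_σ ∈ ℝ^{n_σ×n_σ} be nilpotent; let E_η, A_η ∈ ℝ^{m_η×n_η} with rank E_η = n_η. Set E = blkdiag(E_ε, I_{n_f}, J_σ, E_η) and A = blkdiag(A_ε, J_f, I_{n_σ}, A_η), both of size m×n with m = m_ε+n_f+n_σ+m_η and n = n_ε+n_f+n_σ+n_η. Then rank F_{n+1,[E,A]} = (n+1)(m_ε + n_f + n_η) + n·n_σ. -/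
/-!
After permuting rows and columns, `F_{k,[E,A]}` of a block-diagonal pair is block diagonal with
the four matrices `F_{k,[E_ε,A_ε]}`, `F_{k,[I,J_f]}`, `F_{k,[J_σ,I]}`, `F_{k,[E_η,A_η]}`, so its
rank is the sum of their ranks. If `E` has full column rank, `F_{k,[E,A]}` is injective by back
substitution from the last block row; the full row rank case reduces to this one, since reversing
the block order turns `F_{k,[E,A]}ᵀ` into `F_{k,[Eᵀ,Aᵀ]}`. Finally `F_{k,[J,I]} v = 0` forces
`v_{i+1} = -J v_i`, so once `J ^ k = 0` (true for `k = n + 1 > n_σ`) its kernel is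
`{(x, -Jx, …, (-J)^{k-1} x)}`, of dimension `n_σ`.
-/

open Matrix

open Module Function

theorem LinearMap.finrank_range_prodMap {K M₁ M₂ N₁ N₂ : Type*} [Field K]
    [AddCommGroup M₁] [Module K M₁] [AddCommGroup M₂] [Module K M₂]
    [AddCommGroup N₁] [Module K N₁] [AddCommGroup N₂] [Module K N₂]
    [FiniteDimensional K N₁] [FiniteDimensional K N₂]
    (f : M₁ →ₗ[K] N₁) (g : M₂ →ₗ[K] N₂) :
    finrank K (range (f.prodMap g)) = finrank K (range f) + finrank K (range g) := by
  have h : range (f.prodMap g) = range ((range f).subtype.prodMap (range g).subtype) := by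
    simp only [range_prodMap, Submodule.range_subtype]
  rw [h, finrank_range_of_inj (Subtype.val_injective.prodMap Subtype.val_injective),
    finrank_prod]

namespace Matrix

variable {K : Type*} [Field K]

theorem rank_fromBlocks_zero_zero {m₁ n₁ m₂ n₂ : Type*}
    [Fintype m₁] [Fintype n₁] [Fintype m₂] [Fintype n₂]
    (A : Matrix m₁ n₁ K) (D : Matrix m₂ n₂ K) :
    (fromBlocks A 0 0 D).rank = A.rank + D.rank := by
  let eₘ := LinearEquiv.sumArrowLequivProdArrow m₁ m₂ K K
  let eₙ := LinearEquiv.sumArrowLequivProdArrow n₁ n₂ K K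
  have h : (fromBlocks A 0 0 D).mulVecLin =
      eₘ.symm.toLinearMap ∘ₗ A.mulVecLin.prodMap D.mulVecLin ∘ₗ eₙ.toLinearMap := by
    ext v (i | i)
    · simp only [mulVecLin_apply, fromBlocks_mulVec, zero_mulVec, add_zero, Sum.elim_inl]
      rfl
    · simp only [mulVecLin_apply, fromBlocks_mulVec, zero_mulVec, zero_add, Sum.elim_inr]
      rfl
  rw [rank, h, LinearMap.range_comp, LinearMap.range_comp, LinearEquiv.range, Submodule.map_top,
    LinearEquiv.finrank_map_eq, LinearMap.finrank_range_prodMap, rank, rank]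

theorem mulVecLin_injective_of_rank_eq_card {m n : Type*} [Fintype m] [Fintype n]
    {A : Matrix m n K} (hA : A.rank = Fintype.card n) : Injective A.mulVecLin := by
  have h := A.mulVecLin.finrank_range_add_finrank_ker
  rw [← rank, hA, finrank_fintype_fun_eq_card, add_eq_left, Submodule.finrank_eq_zero] at h
  exact LinearMap.ker_eq_bot.mp h

theorem pow_card_eq_zero_of_isNilpotent {n : Type*} [Fintype n] [DecidableEq n]
    {M : Matrix n n K} (hM : IsNilpotent M) : M ^ Fintype.card n = 0 := by
  have h : M.charpoly = Polynomial.X ^ Fintype.card n :=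
    sub_eq_zero.mp (isNilpotent_charpoly_sub_pow_of_isNilpotent hM).eq_zero
  simpa [h] using M.aeval_self_charpoly

end Matrix

section Fmat

variable {R C : Type*} [Fintype R] [Fintype C]

theorem Fmat_mulVec_apply_s15 {k : ℕ} (E A : Matrix R C ℝ) (v : Fin k × C → ℝ) (i : Fin k) (r : R) :
    (Fmat k E A *ᵥ v) (i, r) = ∑ j : Fin k,
      if (j : ℕ) = i then (E *ᵥ curry v j) r
      else if (j : ℕ) = i + 1 then (A *ᵥ curry v j) r else 0 := by
  rw [mulVec, dotProduct, Fintype.sum_prod_type]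
  refine Finset.sum_congr rfl fun j _ => ?_
  simp only [Fmat, of_apply]
  split_ifs <;> simp [mulVec, dotProduct, curry]

theorem curry_Fmat_mulVec_castSucc {k : ℕ} (E A : Matrix R C ℝ) (v : Fin (k + 1) × C → ℝ)
    (i : Fin k) :
    curry (Fmat (k + 1) E A *ᵥ v) i.castSucc = E *ᵥ curry v i.castSucc + A *ᵥ curry v i.succ := by
  ext r
  rw [curry_apply, Fmat_mulVec_apply_s15, Fintype.sum_eq_add i.castSucc i.succ
    (Fin.castSucc_lt_succ).ne]
  · simp
  · rintro j ⟨h₁, h₂⟩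
    rw [if_neg (fun h => h₁ (Fin.ext h)), if_neg (fun h => h₂ (Fin.ext (by simpa using h)))]

theorem curry_Fmat_mulVec_last {k : ℕ} (E A : Matrix R C ℝ) (v : Fin (k + 1) × C → ℝ) :
    curry (Fmat (k + 1) E A *ᵥ v) (Fin.last k) = E *ᵥ curry v (Fin.last k) := by
  ext r
  rw [curry_apply, Fmat_mulVec_apply_s15, Fintype.sum_eq_single (Fin.last k)]
  · simp
  · intro j hj
    rw [if_neg (fun h => hj (Fin.ext h)), if_neg (by have := j.isLt; rw [Fin.val_last]; omega)]

theorem Fmat_fromBlocks_submatrix {R₂ C₂ : Type*} [Fintype R₂] [Fintype C₂] {k : ℕ}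
    (E₁ A₁ : Matrix R C ℝ) (E₂ A₂ : Matrix R₂ C₂ ℝ) :
    (Fmat k (fromBlocks E₁ 0 0 E₂) (fromBlocks A₁ 0 0 A₂)).submatrix
        (Equiv.prodSumDistrib (Fin k) R R₂).symm (Equiv.prodSumDistrib (Fin k) C C₂).symm =
      fromBlocks (Fmat k E₁ A₁) 0 0 (Fmat k E₂ A₂) := by
  ext (⟨i, r⟩ | ⟨i, r⟩) (⟨j, c⟩ | ⟨j, c⟩) <;> simp [Fmat]

theorem rank_Fmat_fromBlocks {R₂ C₂ : Type*} [Fintype R₂] [Fintype C₂] {k : ℕ}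
    (E₁ A₁ : Matrix R C ℝ) (E₂ A₂ : Matrix R₂ C₂ ℝ) :
    (Fmat k (fromBlocks E₁ 0 0 E₂) (fromBlocks A₁ 0 0 A₂)).rank =
      (Fmat k E₁ A₁).rank + (Fmat k E₂ A₂).rank := by
  rw [← rank_fromBlocks_zero_zero, ← Fmat_fromBlocks_submatrix, rank_submatrix]

theorem Fmat_transpose_submatrix_rev {k : ℕ} (E A : Matrix R C ℝ) :
    (Fmat k E A)ᵀ.submatrix (Fin.revPerm.prodCongr (Equiv.refl C))
        (Fin.revPerm.prodCongr (Equiv.refl R)) = Fmat k Eᵀ Aᵀ := by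
  ext ⟨j, c⟩ ⟨i, r⟩
  have h₁ : k - (j + 1) = k - (i + 1) ↔ (i : ℕ) = j := by omega
  have h₂ : k - (j + 1) = k - (i + 1) + 1 ↔ (i : ℕ) = j + 1 := by omega
  simp only [submatrix_apply, Equiv.prodCongr_apply, Prod.map, Equiv.refl_apply,
    transpose_apply, Fmat, of_apply, Fin.revPerm_apply, Fin.val_rev, h₁, h₂]

theorem Fmat_mulVecLin_injective {k : ℕ} (E A : Matrix R C ℝ) (hE : Injective E.mulVecLin) :
    Injective (Fmat k E A).mulVecLin := by
  cases k with
  | zero => exact fun v w _ => funext fun p => p.1.elim0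
  | succ k =>
    refine (injective_iff_map_eq_zero _).2 fun v hv => ?_
    rw [mulVecLin_apply] at hv
    have hE₀ : ∀ w, E *ᵥ w = 0 → w = 0 := fun w h => hE (by simpa using h)
    have hblock : ∀ i, curry v i = 0 := by
      intro i
      induction i using Fin.reverseInduction with
      | last => exact hE₀ _ (by rw [← curry_Fmat_mulVec_last E A, hv]; rfl)
      | cast i ih =>
        have h := curry_Fmat_mulVec_castSucc E A v i
        rw [hv, ih, mulVec_zero, add_zero] at h
        exact hE₀ _ h.symm
    exact funext fun p => congrFun (hblock p.1) p.2

theorem rank_Fmat_of_rank_eq_card_cols {k : ℕ} {E : Matrix R C ℝ} (A : Matrix R C ℝ)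
    (hE : E.rank = Fintype.card C) : (Fmat k E A).rank = k * Fintype.card C := by
  rw [rank, LinearMap.finrank_range_of_inj
    (Fmat_mulVecLin_injective E A (mulVecLin_injective_of_rank_eq_card hE))]
  simp

theorem rank_Fmat_of_rank_eq_card_rows {k : ℕ} {E : Matrix R C ℝ} (A : Matrix R C ℝ)
    (hE : E.rank = Fintype.card R) : (Fmat k E A).rank = k * Fintype.card R := by
  rw [← rank_transpose, ← rank_submatrix _ (Fin.revPerm.prodCongr (Equiv.refl C))
    (Fin.revPerm.prodCongr (Equiv.refl R)), Fmat_transpose_submatrix_rev,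
    rank_Fmat_of_rank_eq_card_cols _ (by rwa [rank_transpose])]

end Fmat

section Nilpotent

variable {n : Type*} [Fintype n] [DecidableEq n]

def blockColPow (N : Matrix n n ℝ) (k : ℕ) : Matrix (Fin k × n) n ℝ :=
  of fun p c => (N ^ (p.1 : ℕ)) p.2 c

theorem curry_blockColPow_mulVec (N : Matrix n n ℝ) {k : ℕ} (x : n → ℝ) (i : Fin k) :
    curry (blockColPow N k *ᵥ x) i = N ^ (i : ℕ) *ᵥ x :=
  rfl

theorem blockColPow_mulVecLin_injective (N : Matrix n n ℝ) (k : ℕ) :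
    Injective (blockColPow N (k + 1)).mulVecLin := by
  refine (injective_iff_map_eq_zero _).2 fun x hx => ?_
  have h := congrArg (curry · (0 : Fin (k + 1))) hx
  rwa [mulVecLin_apply, curry_blockColPow_mulVec, Fin.val_zero, pow_zero, one_mulVec] at h

theorem ker_Fmat_one_eq_range_blockColPow {k : ℕ} {J : Matrix n n ℝ} (hJ : J ^ (k + 1) = 0) :
    LinearMap.ker (Fmat (k + 1) J 1).mulVecLin =
      LinearMap.range (blockColPow (-J) (k + 1)).mulVecLin := by
  have hJneg : ∀ m : ℕ, J * (-J) ^ m = -(-J) ^ (m + 1) := fun m => by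
    rw [pow_succ', neg_mul, neg_neg]
  ext v
  simp only [LinearMap.mem_ker, LinearMap.mem_range, mulVecLin_apply]
  constructor
  · intro hv
    suffices h : ∀ i, curry v i = curry (blockColPow (-J) (k + 1) *ᵥ curry v 0) i from
      ⟨curry v 0, funext fun p => (congrFun (h p.1) p.2).symm⟩
    intro i
    induction i using Fin.induction with
    | zero => simp [curry_blockColPow_mulVec]
    | succ i ih =>
      have h := curry_Fmat_mulVec_castSucc J 1 v i
      rw [hv, one_mulVec, ih, curry_blockColPow_mulVec, mulVec_mulVec, hJneg, Fin.val_castSucc,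
        neg_mulVec] at h
      rw [curry_blockColPow_mulVec, Fin.val_succ]
      exact (neg_add_eq_zero.mp h.symm).symm
  · rintro ⟨x, rfl⟩
    suffices h : ∀ i, curry (Fmat (k + 1) J 1 *ᵥ (blockColPow (-J) (k + 1) *ᵥ x)) i = 0 from
      funext fun p => congrFun (h p.1) p.2
    intro i
    induction i using Fin.lastCases with
    | last =>
      rw [curry_Fmat_mulVec_last, curry_blockColPow_mulVec, mulVec_mulVec, hJneg, Fin.val_last,
        neg_pow, hJ, mul_zero, neg_zero, zero_mulVec]
    | cast i =>
      rw [curry_Fmat_mulVec_castSucc, curry_blockColPow_mulVec, curry_blockColPow_mulVec,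
        mulVec_mulVec, hJneg, one_mulVec, Fin.val_castSucc, Fin.val_succ, neg_mulVec,
        neg_add_cancel]

theorem rank_Fmat_one_of_pow_eq_zero {k : ℕ} {J : Matrix n n ℝ} (hJ : J ^ (k + 1) = 0) :
    (Fmat (k + 1) J 1).rank = k * Fintype.card n := by
  have h := (Fmat (k + 1) J 1).mulVecLin.finrank_range_add_finrank_ker
  rw [ker_Fmat_one_eq_range_blockColPow hJ,
    LinearMap.finrank_range_of_inj (blockColPow_mulVecLin_injective _ k)] at h
  simp only [finrank_fintype_fun_eq_card, Fintype.card_prod, Fintype.card_fin] at h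
  rw [rank]
  linarith

end Nilpotent

/-- For `E = blkdiag(E_ε, I, J_σ, E_η)` and `A = blkdiag(A_ε, J_f, I, A_η)` with `E_ε`
of full row rank, `J_σ` nilpotent and `E_η` of full column rank,
`rank F_{n+1,[E,A]} = (n+1)(m_ε + n_f + n_η) + n·n_σ`. -/
theorem stmt_15 {mε nε nf nσ mη nη : ℕ}
    (Eε Aε : Matrix (Fin mε) (Fin nε) ℝ)
    (Jf : Matrix (Fin nf) (Fin nf) ℝ)
    (Jσ : Matrix (Fin nσ) (Fin nσ) ℝ)
    (Eη Aη : Matrix (Fin mη) (Fin nη) ℝ)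
    (hEε : Eε.rank = mε)
    (hJσ : IsNilpotent Jσ)
    (hEη : Eη.rank = nη)
    (n : ℕ) (hn : n = nε + nf + nσ + nη) :
    (Fmat (n + 1)
        (Matrix.fromBlocks Eε 0 0
          (Matrix.fromBlocks (1 : Matrix (Fin nf) (Fin nf) ℝ) 0 0
            (Matrix.fromBlocks Jσ 0 0 Eη)))
        (Matrix.fromBlocks Aε 0 0
          (Matrix.fromBlocks Jf 0 0
            (Matrix.fromBlocks (1 : Matrix (Fin nσ) (Fin nσ) ℝ) 0 0 Aη)))).rank =
      (n + 1) * (mε + nf + nη) + n * nσ := by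
  have hJσ_pow : Jσ ^ (n + 1) = 0 := by
    refine pow_eq_zero_of_le ?_ (pow_card_eq_zero_of_isNilpotent hJσ)
    rw [Fintype.card_fin]
    omega
  rw [rank_Fmat_fromBlocks, rank_Fmat_fromBlocks, rank_Fmat_fromBlocks,
    rank_Fmat_of_rank_eq_card_rows Aε (by simpa using hEε),
    rank_Fmat_of_rank_eq_card_cols Jf rank_one, rank_Fmat_one_of_pow_eq_zero hJσ_pow,
    rank_Fmat_of_rank_eq_card_cols Aη (by simpa using hEη)]
  simp only [Fintype.card_fin]
  ring
end
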